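/- If a smooth function f: ℝ → ℂ has the form f(τ) = c·((1−τ)^a · ln(1−τ) · P(τ) + (1+τ)^b · ln(1+τ) · Q(τ)) + R(τ) on (−1,1), where a, b ≥ 1 are integers, P, Q, R are polynomials, and c is a constant, then f extends continuously to [−1,1]; moreover if c ≠ 0, a = 1, and P(1) ≠ 0, then f is not of class C¹ at τ = 1. -/

import Mathlib

/-!
The terms `(1 ∓ τ) ^ k * log (1 ∓ τ)` with `k ≥ 1` are continuous up to `τ = ±1` because
`x log x → 0` as `x → 0⁺`. For `a = 1`, everything but `c (1 - τ) log (1 - τ) P(τ)` is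
differentiable at `τ = 1`; that term tends to `0`, so any differentiable extension vanishes at `1`
and its difference quotient there is `-c log (1 - τ) P(τ)`, which is unbounded since `P(1) ≠ 0`.
-/

open Complex Set Filter Topology

lemma continuous_pow_mul_log {a : ℕ} (ha : 0 < a) :
    Continuous fun x : ℝ => x ^ a * Real.log x := by
  obtain ⟨n, rfl⟩ := Nat.exists_eq_add_of_lt ha
  simpa only [zero_add, pow_succ, mul_assoc] using
    (continuous_pow n).fun_mul Real.continuous_mul_log

lemma tendsto_sub_left_nhdsLT_nhdsGT_zero (x : ℝ) :
    Tendsto (fun τ => x - τ) (𝓝[<] x) (𝓝[>] 0) := by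
  refine tendsto_nhdsWithin_of_tendsto_nhds_of_eventually_within _ ?_ ?_
  · have := (tendsto_const_nhds (x := x).sub (tendsto_id (x := 𝓝 x))).mono_left
      (nhdsWithin_le_nhds (s := Iio x))
    rwa [sub_self] at this
  · filter_upwards [self_mem_nhdsWithin] with τ (hτ : τ < x) using sub_pos.mpr hτ

theorem not_differentiableAt_of_eventuallyEq_sub_mul_log_smul {E : Type*}
    [NormedAddCommGroup E] [NormedSpace ℝ E] {h φ : ℝ → E} {x : ℝ} {v : E}
    (hφ : Tendsto φ (𝓝[<] x) (𝓝 v)) (hv : v ≠ 0)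
    (hh : h =ᶠ[𝓝[<] x] fun τ => ((x - τ) * Real.log (x - τ)) • φ τ) :
    ¬ DifferentiableAt ℝ h x := by
  intro hdiff
  have hsub := tendsto_sub_left_nhdsLT_nhdsGT_zero x
  have hmul_log : Tendsto (fun τ => (x - τ) * Real.log (x - τ)) (𝓝[<] x) (𝓝 0) := by
    simpa [Function.comp_def] using
      (Real.continuous_mul_log.tendsto 0).comp (hsub.mono_right nhdsWithin_le_nhds)
  have hx : h x = 0 := by
    have hcont : Tendsto h (𝓝[<] x) (𝓝 (h x)) :=
      hdiff.continuousAt.tendsto.mono_left nhdsWithin_le_nhds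
    exact tendsto_nhds_unique hcont (by simpa using (hmul_log.smul hφ).congr' hh.symm)
  have hslope : slope h x =ᶠ[𝓝[<] x] fun τ => -Real.log (x - τ) • φ τ := by
    filter_upwards [hh, self_mem_nhdsWithin] with τ hτ hlt
    have hne : τ - x ≠ 0 := sub_ne_zero.mpr (ne_of_lt hlt)
    rw [slope_def_module, hτ, hx, sub_zero, smul_smul]
    congr 1
    field_simp
    ring
  have hbounded : Tendsto (slope h x) (𝓝[<] x) (𝓝 (deriv h x)) :=
    (hasDerivAt_iff_tendsto_slope.mp hdiff.hasDerivAt).mono_left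
      (nhdsWithin_mono x fun τ hτ => ne_of_lt hτ)
  have hunbounded : Tendsto (fun τ => ‖-Real.log (x - τ) • φ τ‖) (𝓝[<] x) atTop := by
    have hlog : Tendsto (fun τ => |Real.log (x - τ)|) (𝓝[<] x) atTop :=
      tendsto_abs_atBot_atTop.comp (Real.tendsto_log_nhdsGT_zero.comp hsub)
    simpa [norm_smul] using hlog.atTop_mul_pos (norm_pos_iff.mpr hv) hφ.norm
  exact not_tendsto_atTop_of_tendsto_nhds ((hbounded.congr' hslope).norm) hunbounded

/-- a function of the generic Bianchi-transport form
`f(τ) = c((1-τ)^a ln(1-τ) P(τ) + (1+τ)^b ln(1+τ) Q(τ)) + R(τ)` on `(-1,1)` extends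
continuously to `[-1,1]`; if moreover `c ≠ 0`, `a = 1` and `P(1) ≠ 0`, then no extension
of `f` is differentiable (C¹) at `τ = 1`. -/
theorem transport_coefficient_structure (f : ℝ → ℂ) (c : ℂ) (a b : ℕ)
    (ha : 1 ≤ a) (hb : 1 ≤ b) (P Q R : Polynomial ℂ)
    (hf : ∀ τ ∈ Ioo (-1 : ℝ) 1,
      f τ = c * ((1 - (τ : ℂ)) ^ a * (Real.log (1 - τ) : ℂ) * P.eval (τ : ℂ)
        + (1 + (τ : ℂ)) ^ b * (Real.log (1 + τ) : ℂ) * Q.eval (τ : ℂ)) + R.eval (τ : ℂ)) :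
    (∃ g : ℝ → ℂ, ContinuousOn g (Icc (-1 : ℝ) 1) ∧ ∀ τ ∈ Ioo (-1 : ℝ) 1, g τ = f τ) ∧
    (c ≠ 0 → a = 1 → P.eval 1 ≠ 0 →
      ¬ ∃ g : ℝ → ℂ, (∀ τ ∈ Ioo (-1 : ℝ) 1, g τ = f τ) ∧ DifferentiableAt ℝ g 1) := by
  refine ⟨⟨fun τ => c * ((((1 - τ) ^ a * Real.log (1 - τ) : ℝ) : ℂ) * P.eval (τ : ℂ)
      + (((1 + τ) ^ b * Real.log (1 + τ) : ℝ) : ℂ) * Q.eval (τ : ℂ)) + R.eval (τ : ℂ), ?_, ?_⟩, ?_⟩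
  · have hA := (continuous_pow_mul_log ha).comp (continuous_sub_left (1 : ℝ))
    have hB := (continuous_pow_mul_log hb).comp (continuous_const_add (1 : ℝ))
    fun_prop
  · intro τ hτ
    rw [hf τ hτ]
    push_cast
    ring
  rintro hc rfl hP1 ⟨g, hg, hg_diff⟩
  set S : ℝ → ℂ := fun τ =>
    c * ((1 + (τ : ℂ)) ^ b * (Real.log (1 + τ) : ℂ) * Q.eval (τ : ℂ)) + R.eval (τ : ℂ)
  have hS : DifferentiableAt ℝ S 1 := by
    have hofReal : Differentiable ℝ ((↑) : ℝ → ℂ) := ofRealCLM.differentiable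
    have hQ : DifferentiableAt ℝ (fun τ : ℝ => Q.eval (τ : ℂ)) 1 :=
      ((Q.differentiable.restrictScalars ℝ).comp hofReal).differentiableAt
    have hR : DifferentiableAt ℝ (fun τ : ℝ => R.eval (τ : ℂ)) 1 :=
      ((R.differentiable.restrictScalars ℝ).comp hofReal).differentiableAt
    have hlog : DifferentiableAt ℝ (fun τ : ℝ => Real.log (1 + τ)) 1 :=
      (differentiableAt_id.const_add 1).log (by norm_num)
    have hlog_ofReal := hofReal.differentiableAt.comp 1 hlog
    simp only [S]
    fun_prop
  refine not_differentiableAt_of_eventuallyEq_sub_mul_log_smul (h := g - S)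
    (φ := fun τ => c * P.eval (τ : ℂ)) (v := c * P.eval 1) ?_ (mul_ne_zero hc hP1) ?_
    (hg_diff.sub hS)
  · simpa using (((P.continuous.comp continuous_ofReal).const_mul c).tendsto 1).mono_left
      nhdsWithin_le_nhds
  · filter_upwards [Ioo_mem_nhdsLT (show (-1 : ℝ) < 1 by norm_num)] with τ hτ
    simp only [Pi.sub_apply, hg τ hτ, hf τ hτ, S, Complex.real_smul]
    push_cast
    ring
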